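/- For the [[13,1,4]]_3 CSS code with weight enumerator A(z) = 1+8z³+600z⁶+720z⁷+4320z⁸+18320z⁹+61200z¹⁰+151200z¹¹+178144z¹²+116928z¹³ and dual enumerator B(z) obtained from the qutrit MacWilliams identity with n=13, k=1, one has B(-1/2) = 0; equivalently, the acceptance probability of thirteen pure strange states onto the trivial-syndrome codespace is zero, so the code cannot distill the strange state. -/
import Mathlib

/-- The weight enumerator `A(z)` of the `[[13,1,4]]_3` CSS code of Sharma–Garani. -/
noncomputable def A13 : ℝ → ℝ := fun z =>
  1 + 8*z^3 + 600*z^6 + 720*z^7 + 4320*z^8 + 18320*z^9 + 61200*z^10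
    + 151200*z^11 + 178144*z^12 + 116928*z^13

/-- the dual enumerator of the `[[13,1,4]]_3` code vanishes at `z = -1/2`, so
the acceptance probability of thirteen pure strange states is zero. -/
theorem sharma_garani_13_code_zero_acceptance (B : ℝ → ℝ)
    (hMW : ∀ z : ℝ, 1 + 8 * z ≠ 0 →
      B z = (1 + 8 * z) ^ 13 / 3 ^ 12 * A13 ((1 - z) / (1 + 8 * z))) :
    B (-1/2) = 0 := by
  have h := hMW (-1/2) (by norm_num)
  rw [h]
  norm_num [A13]
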